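/- arXiv:2512.06478 — 7 statements merged into one kernel-verified Lean document; each statement's English description precedes it below -/
import Mathlib

section
/- Let F be a field, S ⊆ F with |S| = n, k ≤ n, and r : S → F any function. If p and p' are distinct polynomials over F of degree less than k, then it is not possible that both p and p' disagree with r on at most (n-k)/2 points of S each. In other words, there is at most one polynomial of degree < k agreeing with r on more than (n+k)/2 points. -/
/-! Two such polynomials jointly disagree with `r` on at most `n - k` points, so they agree with
`r`, and hence with each other, on at least `k` points of `S`. A polynomial of degree `< k` is
determined by its values at `k` points, so `p = p'`. -/

open Finset Polynomial

theorem Finset.card_le_card_filter_and_add_card_filter_not {α : Type*} (s : Finset α)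
    (P Q : α → Prop) [DecidablePred P] [DecidablePred Q] :
    #s ≤ #(s.filter fun a => P a ∧ Q a) + #(s.filter fun a => ¬P a) +
      #(s.filter fun a => ¬Q a) := by
  classical
  have hcover : s ⊆ (s.filter fun a => P a ∧ Q a) ∪ (s.filter fun a => ¬P a) ∪
      (s.filter fun a => ¬Q a) := by
    intro a ha
    simp only [mem_union, mem_filter]
    tauto
  calc #s ≤ _ := card_le_card hcover
    _ ≤ _ := card_union_le _ _
    _ ≤ _ := by gcongr; exact card_union_le _ _

theorem stmt_3_general {F : Type*} [Field F] [DecidableEq F] {n k : ℕ}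
    (S : Finset F) (hS : S.card = n) (r : F → F)
    (p p' : Polynomial F) (hne : p ≠ p')
    (hp : p.degree < (k : WithBot ℕ)) (hp' : p'.degree < (k : WithBot ℕ)) :
    ¬(((S.filter fun a => p.eval a ≠ r a).card : ℝ) ≤ ((n : ℝ) - k) / 2 ∧
      ((S.filter fun a => p'.eval a ≠ r a).card : ℝ) ≤ ((n : ℝ) - k) / 2) := by
  rintro ⟨hbad, hbad'⟩
  set T := S.filter fun a => p.eval a = r a ∧ p'.eval a = r a
  have hcover : (n : ℝ) ≤ #T + #(S.filter fun a => p.eval a ≠ r a) +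
      #(S.filter fun a => p'.eval a ≠ r a) := by
    rw [← hS]
    exact_mod_cast S.card_le_card_filter_and_add_card_filter_not
      (fun a => p.eval a = r a) (fun a => p'.eval a = r a)
  have hkT : (k : WithBot ℕ) ≤ #T := by
    have : (k : ℝ) ≤ #T := by linarith
    exact_mod_cast this
  refine hne (eq_of_degrees_lt_of_eval_finset_eq T (hp.trans_le hkT) (hp'.trans_le hkT) ?_)
  intro a ha
  obtain ⟨-, hpa, hpa'⟩ := mem_filter.mp ha
  rw [hpa, hpa']

/-- Unique decoding guarantee: two distinct polynomials of degree `< k` cannot both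
disagree with a received word `r` on at most `(n-k)/2` points of `S` each. -/
theorem stmt_3 {F : Type*} [Field F] [DecidableEq F] {n k : ℕ}
    (S : Finset F) (hS : S.card = n) (hkn : k ≤ n) (r : F → F)
    (p p' : Polynomial F) (hne : p ≠ p')
    (hp : p.degree < (k : WithBot ℕ)) (hp' : p'.degree < (k : WithBot ℕ)) :
    ¬(((S.filter fun a => p.eval a ≠ r a).card : ℝ) ≤ ((n : ℝ) - k) / 2 ∧
      ((S.filter fun a => p'.eval a ≠ r a).card : ℝ) ≤ ((n : ℝ) - k) / 2) :=
  stmt_3_general S hS r p p' hne hp hp'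
end

section
/- (Bivariate interpolation) Let F be a finite field, S ⊆ F with |S| = n, and r : S → F any function. Let D be a natural number with (D+1)^2 > n. Then there exists a nonzero bivariate polynomial Q(X,Y) ∈ F[X,Y] with deg_X(Q) ≤ D and deg_Y(Q) ≤ D such that Q(a, r(a)) = 0 for all a ∈ S. -/
/-! Evaluation at the points is a linear map from the polynomials of individual degree at most `D`,
a space of dimension `(D + 1) ^ 2` with the monomials as basis, to a space of dimension `n`.
Since `n < (D + 1) ^ 2`, its kernel contains a nonzero polynomial. -/

open MvPolynomial Module

namespace MvPolynomial

theorem mem_restrictDegree_iff_degreeOf_le {σ R : Type*} [CommSemiring R] (p : MvPolynomial σ R)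
    (n : ℕ) : p ∈ restrictDegree σ R n ↔ ∀ i, degreeOf i p ≤ n := by
  simp only [mem_restrictDegree, degreeOf_le_iff]
  exact ⟨fun h i s hs => h s hs i, fun h s hs i => h i s hs⟩

theorem finrank_restrictDegree (σ K : Type*) [Fintype σ] [Field K] (D : ℕ) :
    finrank K (restrictDegree σ K D) = (D + 1) ^ Fintype.card σ := by
  rw [restrictDegree, finrank_eq_nat_card_basis (basisRestrictSupport K _)]
  calc Nat.card {s : σ →₀ ℕ | ∀ i, s i ≤ D}
      = Nat.card (σ → Fin (D + 1)) :=
        Nat.card_congr <| (Finsupp.equivFunOnFinite.subtypeEquiv fun _ => Iff.rfl).trans <|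
          (Equiv.subtypePiEquivPi).trans <| Equiv.piCongrRight fun _ =>
            (Equiv.subtypeEquivRight fun _ => Nat.lt_succ_iff.symm).trans Fin.equivSubtype.symm
    _ = (D + 1) ^ Fintype.card σ := by rw [Nat.card_fun, Nat.card_fin, Nat.card_eq_fintype_card]

theorem exists_ne_zero_mem_restrictDegree_forall_eval_eq_zero {σ ι K : Type*} [Fintype σ]
    [Fintype ι] [Field K] {D : ℕ} (x : ι → σ → K) (h : Fintype.card ι < (D + 1) ^ Fintype.card σ) :
    ∃ Q ∈ restrictDegree σ K D, Q ≠ 0 ∧ ∀ i, eval (x i) Q = 0 := by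
  let evalAt : restrictDegree σ K D →ₗ[K] ι → K :=
    LinearMap.pi fun i => (aeval (x i)).toLinearMap ∘ₗ (restrictDegree σ K D).subtype
  have hker : LinearMap.ker evalAt ≠ ⊥ := LinearMap.ker_ne_bot_of_finrank_lt <| by
    rwa [finrank_restrictDegree, finrank_fintype_fun_eq_card]
  obtain ⟨⟨Q, hQ⟩, hQker, hQ0⟩ := (Submodule.ne_bot_iff _).mp hker
  refine ⟨Q, hQ, fun h => hQ0 (Subtype.ext h), fun i => ?_⟩
  simpa [evalAt, coe_aeval_eq_eval] using congrFun hQker i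

end MvPolynomial

theorem stmt_4_general {F : Type*} [Field F] {n D : ℕ}
    (S : Finset F) (hS : S.card = n) (r : F → F) (hD : n < (D + 1) ^ 2) :
    ∃ Q : MvPolynomial (Fin 2) F, Q ≠ 0 ∧
      MvPolynomial.degreeOf 0 Q ≤ D ∧ MvPolynomial.degreeOf 1 Q ≤ D ∧
      ∀ a ∈ S, MvPolynomial.eval ![a, r a] Q = 0 := by
  obtain ⟨Q, hQdeg, hQ0, hQeval⟩ :=
    exists_ne_zero_mem_restrictDegree_forall_eval_eq_zero (D := D) (fun a : S => ![(a : F), r a])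
      (by simpa [hS] using hD)
  rw [mem_restrictDegree_iff_degreeOf_le] at hQdeg
  exact ⟨Q, hQ0, hQdeg 0, hQdeg 1, fun a ha => hQeval ⟨a, ha⟩⟩

/-- Bivariate interpolation: if `(D+1)^2 > n` then there is a nonzero bivariate
polynomial `Q` with individual degrees at most `D` vanishing on `(a, r a)` for all
`a ∈ S`, where `|S| = n`. -/
theorem stmt_4 {F : Type*} [Field F] [Fintype F] {n D : ℕ}
    (S : Finset F) (hS : S.card = n) (r : F → F) (hD : n < (D + 1) ^ 2) :
    ∃ Q : MvPolynomial (Fin 2) F, Q ≠ 0 ∧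
      MvPolynomial.degreeOf 0 Q ≤ D ∧ MvPolynomial.degreeOf 1 Q ≤ D ∧
      ∀ a ∈ S, MvPolynomial.eval ![a, r a] Q = 0 :=
  stmt_4_general S hS r hD
end

section
/- (Bézout-type lemma for graphs of polynomials) Let F be a field, Q(X,Y) ∈ F[X,Y] nonzero with deg_X(Q) ≤ D_x and deg_Y(Q) ≤ D_y, and p(X) ∈ F[X] of degree d. If the set Z = {(a,b) ∈ F² : Q(a,b) = 0 and b = p(a)} has size strictly greater than D_x + d·D_y, then (Y - p(X)) divides Q(X,Y) in F[X,Y]. -/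
/-!
Restricting `Q` to the graph of `p` gives `g(X) = Q(X, p(X))`, of degree at most
`deg_X Q + deg p · deg_Y Q`. Distinct points of the graph have distinct abscissae, so `g` has
more roots than its degree and vanishes. Finally `Q - Q(X, p(X))` is always divisible by
`Y - p(X)`.
-/

open Polynomial

namespace MvPolynomial

theorem X_sub_dvd_sub_aeval_update {R σ : Type*} [CommRing R] [DecidableEq σ]
    (i : σ) (P Q : MvPolynomial σ R) :
    X i - P ∣ Q - aeval (Function.update X i P) Q := by
  -- modulo `X i - P`, substituting `P` for `X i` is the identity
  let π := Ideal.Quotient.mkₐ R (Ideal.span {X i - P})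
  have hπ : π.comp (aeval (Function.update X i P)) = π := by
    refine algHom_ext fun j => ?_
    obtain rfl | hj := eq_or_ne j i
    · simp only [π, AlgHom.comp_apply, aeval_X, Function.update_self]
      rw [Ideal.Quotient.mkₐ_eq_mk, Ideal.Quotient.mk_eq_mk_iff_sub_mem,
        Ideal.mem_span_singleton, dvd_sub_comm]
    · simp [π, hj]
  rw [← Ideal.mem_span_singleton, ← Ideal.Quotient.mk_eq_mk_iff_sub_mem]
  exact (congrArg (· Q) hπ).symm

end MvPolynomial

noncomputable def restrictToGraph {R : Type*} [CommSemiring R]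
    (Q : MvPolynomial (Fin 2) R) (p : R[X]) : R[X] :=
  MvPolynomial.aeval ![X, p] Q

section

variable {R : Type*} [CommSemiring R] (Q : MvPolynomial (Fin 2) R) (p : R[X])

theorem aeval_restrictToGraph {A : Type*} [CommSemiring A] [Algebra R A] (x : A) :
    aeval x (restrictToGraph Q p) = MvPolynomial.aeval ![x, aeval x p] Q := by
  rw [restrictToGraph, MvPolynomial.comp_aeval_apply]
  congr 2
  funext i
  fin_cases i <;> simp

theorem eval_restrictToGraph (a : R) :
    (restrictToGraph Q p).eval a = MvPolynomial.eval ![a, p.eval a] Q := by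
  simpa [MvPolynomial.coe_aeval_eq_eval] using aeval_restrictToGraph Q p a

theorem natDegree_restrictToGraph_le :
    (restrictToGraph Q p).natDegree ≤
      Q.degreeOf 0 + p.natDegree * Q.degreeOf 1 := by
  conv_lhs => rw [restrictToGraph, Q.as_sum, map_sum]
  refine natDegree_sum_le_of_forall_le _ _ fun m hm => ?_
  rw [MvPolynomial.aeval_monomial, Finsupp.prod_fintype _ _ (fun i => pow_zero _),
    Fin.prod_univ_two]
  calc _ ≤ (X ^ m 0 * p ^ m 1 : R[X]).natDegree := natDegree_C_mul_le _ _
    _ ≤ m 0 + m 1 * p.natDegree :=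
        natDegree_mul_le.trans (add_le_add (natDegree_X_pow_le _) natDegree_pow_le)
    _ ≤ Q.degreeOf 0 + p.natDegree * Q.degreeOf 1 := by
        rw [mul_comm p.natDegree]
        gcongr <;> exact MvPolynomial.monomial_le_degreeOf _ hm

end

theorem stmt_5_general {F : Type*} [Field F] {Dx Dy d : ℕ}
    (Q : MvPolynomial (Fin 2) F)
    (hDx : MvPolynomial.degreeOf 0 Q ≤ Dx) (hDy : MvPolynomial.degreeOf 1 Q ≤ Dy)
    (p : Polynomial F) (hd : p.natDegree = d)
    (Z : Finset (F × F))
    (hZ : ∀ z ∈ Z, MvPolynomial.eval ![z.1, z.2] Q = 0 ∧ z.2 = p.eval z.1)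
    (hcard : Dx + d * Dy < Z.card) :
    (MvPolynomial.X 1 - Polynomial.aeval (MvPolynomial.X 0) p) ∣ Q := by
  classical
  have hfst : Set.InjOn Prod.fst (Z : Set (F × F)) := fun z hz w hw h =>
    Prod.ext h (by rw [(hZ z hz).2, (hZ w hw).2, h])
  have hvanish : restrictToGraph Q p = 0 := by
    refine eq_zero_of_natDegree_lt_card_of_eval_eq_zero' _ (Z.image Prod.fst) ?_ ?_
    · simp only [Finset.mem_image]
      rintro _ ⟨z, hz, rfl⟩
      rw [eval_restrictToGraph, ← (hZ z hz).2]
      exact (hZ z hz).1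
    · calc _ ≤ Q.degreeOf 0 + p.natDegree * Q.degreeOf 1 := natDegree_restrictToGraph_le Q p
        _ ≤ Dx + d * Dy := by rw [hd]; gcongr
        _ < _ := hcard
        _ = _ := (Finset.card_image_of_injOn hfst).symm
  have hupdate : Function.update (MvPolynomial.X (R := F)) 1 (aeval (MvPolynomial.X 0) p) =
      ![MvPolynomial.X 0, aeval (MvPolynomial.X 0) p] := by
    funext i
    fin_cases i <;> simp
  have h := MvPolynomial.X_sub_dvd_sub_aeval_update 1 (aeval (MvPolynomial.X 0) p) Q
  rwa [hupdate, ← aeval_restrictToGraph, hvanish, map_zero, sub_zero] at h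

/-- Bézout-type lemma for graphs of polynomials: if `Q(X,Y)` (with `deg_X Q ≤ Dx`,
`deg_Y Q ≤ Dy`) vanishes on more than `Dx + d·Dy` points of the graph of a degree-`d`
polynomial `p`, then `Y - p(X)` divides `Q`. -/
theorem stmt_5 {F : Type*} [Field F] {Dx Dy d : ℕ}
    (Q : MvPolynomial (Fin 2) F) (hQ : Q ≠ 0)
    (hDx : MvPolynomial.degreeOf 0 Q ≤ Dx) (hDy : MvPolynomial.degreeOf 1 Q ≤ Dy)
    (p : Polynomial F) (hd : p.natDegree = d)
    (Z : Finset (F × F))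
    (hZ : ∀ z ∈ Z, MvPolynomial.eval ![z.1, z.2] Q = 0 ∧ z.2 = p.eval z.1)
    (hcard : Dx + d * Dy < Z.card) :
    (MvPolynomial.X 1 - Polynomial.aeval (MvPolynomial.X 0) p) ∣ Q :=
  stmt_5_general Q hDx hDy p hd Z hZ hcard
end

section
/- Let F be a field, Q(X,Y) ∈ F[X,Y], and p(X) ∈ F[X] with deg p ≤ k-1. If Q has (1,k-1)-weighted degree at most D and the set {(a, p(a)) : a ∈ F, Q(a, p(a)) = 0} has size greater than D, then (Y - p(X)) divides Q(X,Y). -/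
/-!
Substituting `Y = p(X)` turns `Q` into a univariate polynomial of degree at most the
`(1, k-1)`-weighted degree of `Q`, hence at most `D`; it has more than `D` roots, so it is zero.
On the other hand `Q(X, Y) ≡ Q(X, p(X))` modulo `Y - p(X)`, since the two evaluations agree on
the variables modulo `Y - p(X)`.
-/

open Polynomial

namespace MvPolynomial

theorem natDegree_aeval_le_weightedTotalDegree {σ R : Type*} [CommSemiring R]
    (w : σ → ℕ) (f : σ → R[X]) (hf : ∀ i, (f i).natDegree ≤ w i) (Q : MvPolynomial σ R) :
    (aeval f Q).natDegree ≤ weightedTotalDegree w Q := by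
  classical
  conv_lhs => rw [Q.as_sum, map_sum]
  refine natDegree_sum_le_of_forall_le _ _ fun m hm => ?_
  calc (aeval f (monomial m (Q.coeff m))).natDegree
      ≤ ∑ i ∈ m.support, m i * w i := by
        rw [aeval_monomial, Polynomial.algebraMap_eq]
        refine (natDegree_C_mul_le _ _).trans <| (natDegree_prod_le _ _).trans <|
          Finset.sum_le_sum fun i _ => natDegree_pow_le.trans (Nat.mul_le_mul_left _ (hf i))
    _ = Finsupp.weight w m := by simp [Finsupp.weight_apply, Finsupp.sum]
    _ ≤ weightedTotalDegree w Q := le_weightedTotalDegree w hm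

theorem polynomial_eval_aeval {σ R : Type*} [CommSemiring R] (f : σ → R[X]) (a : R)
    (Q : MvPolynomial σ R) : (aeval f Q).eval a = eval (fun i => (f i).eval a) Q := by
  induction Q using MvPolynomial.induction_on <;> simp_all

theorem dvd_sub_apply_of_forall_dvd_sub_apply_X {σ R S : Type*} [CommSemiring R] [CommRing S]
    [Algebra R S] (φ ψ : MvPolynomial σ R →ₐ[R] S) (d : S) (h : ∀ i, d ∣ φ (X i) - ψ (X i))
    (Q : MvPolynomial σ R) : d ∣ φ Q - ψ Q := by
  have hext : (Ideal.Quotient.mkₐ R (Ideal.span {d})).comp φ =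
      (Ideal.Quotient.mkₐ R (Ideal.span {d})).comp ψ :=
    algHom_ext fun i => by
      simpa [Ideal.Quotient.mkₐ_eq_mk, Ideal.Quotient.eq, Ideal.mem_span_singleton] using h i
  simpa [Ideal.Quotient.mkₐ_eq_mk, Ideal.Quotient.eq, Ideal.mem_span_singleton] using
    congr($hext Q)

end MvPolynomial

open MvPolynomial

theorem stmt_6_general {F : Type*} [Field F] {k D : ℕ}
    (Q : MvPolynomial (Fin 2) F)
    (hD : MvPolynomial.weightedTotalDegree ![1, k - 1] Q ≤ D)
    (p : Polynomial F) (hp : p.natDegree ≤ k - 1)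
    (A : Finset F) (hA : ∀ a ∈ A, MvPolynomial.eval ![a, p.eval a] Q = 0)
    (hcard : D < A.card) :
    (MvPolynomial.X 1 - Polynomial.aeval (MvPolynomial.X 0) p) ∣ Q := by
  set restrict : MvPolynomial (Fin 2) F →ₐ[F] F[X] := aeval ![Polynomial.X, p]
  have hdeg : (restrict Q).natDegree ≤ D :=
    (natDegree_aeval_le_weightedTotalDegree _ _
      (Fin.forall_fin_two.2 ⟨by simp, by simpa⟩) Q).trans hD
  have hrestrict : restrict Q = 0 := by
    refine eq_zero_of_natDegree_lt_card_of_eval_eq_zero' _ A (fun a ha => ?_)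
      (hdeg.trans_lt hcard)
    rw [polynomial_eval_aeval, ← hA a ha]
    congr 2; funext i; fin_cases i <;> simp
  have hdvd := dvd_sub_apply_of_forall_dvd_sub_apply_X (AlgHom.id F _)
    ((Polynomial.aeval (X 0)).comp restrict) (X 1 - Polynomial.aeval (X 0) p)
    (Fin.forall_fin_two.2 ⟨by simp [restrict], by simp [restrict]⟩) Q
  simpa [hrestrict] using hdvd

/-- Weighted-degree Bézout-type lemma: if `Q` has `(1, k-1)`-weighted degree at most `D`
and vanishes at `(a, p a)` for more than `D` values `a`, where `deg p ≤ k-1`, then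
`Y - p(X)` divides `Q`. -/
theorem stmt_6 {F : Type*} [Field F] {k D : ℕ} (hk : 1 ≤ k)
    (Q : MvPolynomial (Fin 2) F)
    (hD : MvPolynomial.weightedTotalDegree ![1, k - 1] Q ≤ D)
    (p : Polynomial F) (hp : p.natDegree ≤ k - 1)
    (A : Finset F) (hA : ∀ a ∈ A, MvPolynomial.eval ![a, p.eval a] Q = 0)
    (hcard : D < A.card) :
    (MvPolynomial.X 1 - Polynomial.aeval (MvPolynomial.X 0) p) ∣ Q :=
  stmt_6_general Q hD p hp A hA hcard
end

section
/- Imposing a root of multiplicity m at a single point (a,b) ∈ F² on a bivariate polynomial Q ∈ F[X,Y] amounts to m(m+1)/2 homogeneous linear conditions on the coefficients of Q; consequently, for S ⊆ F with |S| = n, a function r : S → F, and any D such that the number of monomials of (1,k-1)-weighted degree at most D exceeds n·m(m+1)/2, there exists a nonzero Q of (1,k-1)-weighted degree at most D having a root of multiplicity m at (a, r(a)) for every a ∈ S. -/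
/-!
The conditions "all coefficients of degree `< m` of `Q(X + a, Y + r a)` vanish" are linear in
`Q`, and there are `m(m+1)/2` of them for each `a ∈ S`. Restricted to the span of the monomials
`X^i Y^j` with `i + j(k-1) ≤ D`, this is a linear map into a space of smaller dimension, so it
has a nonzero kernel element.
-/

open MvPolynomial Finset

section LinearAlgebra

variable {σ R ι : Type*} [Field R] [Fintype ι]

theorem MvPolynomial.exists_ne_zero_mem_restrictSupport_of_card_lt (s : Finset (σ →₀ ℕ))
    (L : MvPolynomial σ R →ₗ[R] ι → R) (h : Fintype.card ι < s.card) :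
    ∃ Q ∈ restrictSupport R (s : Set (σ →₀ ℕ)), Q ≠ 0 ∧ L Q = 0 := by
  let b := basisRestrictSupport R (s : Set (σ →₀ ℕ))
  have : FiniteDimensional R (restrictSupport R (s : Set (σ →₀ ℕ))) := .of_basis b
  have hdim : Module.finrank R (ι → R) <
      Module.finrank R (restrictSupport R (s : Set (σ →₀ ℕ))) := by
    rw [Module.finrank_fintype_fun_eq_card, Module.finrank_eq_card_basis b]
    simpa using h
  obtain ⟨⟨Q, hQs⟩, hQL, hQ0⟩ := Submodule.exists_mem_ne_zero_of_ne_bot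
    (LinearMap.ker_ne_bot_of_finrank_lt (f := L.domRestrict _) hdim)
  exact ⟨Q, hQs, fun h => hQ0 (Subtype.ext h), hQL⟩

end LinearAlgebra

theorem MvPolynomial.weightedTotalDegree_le_of_mem_restrictSupport {σ R M : Type*}
    [CommSemiring R] [AddCommMonoid M] [SemilatticeSup M] [OrderBot M] {w : σ → M}
    {s : Set (σ →₀ ℕ)} {D : M} {Q : MvPolynomial σ R} (hQ : Q ∈ restrictSupport R s)
    (hs : ∀ d ∈ s, Finsupp.weight w d ≤ D) :
    weightedTotalDegree w Q ≤ D :=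
  Finset.sup_le fun d hd => hs d (hQ hd)

noncomputable def Finsupp.prodEquivFinTwo : ℕ × ℕ ≃ (Fin 2 →₀ ℕ) :=
  (finTwoArrowEquiv ℕ).symm.trans Finsupp.equivFunOnFinite.symm

theorem Finsupp.weight_prodEquivFinTwo (w : Fin 2 → ℕ) (p : ℕ × ℕ) :
    weight w (prodEquivFinTwo p) = p.1 * w 0 + p.2 * w 1 := by
  simp [prodEquivFinTwo, weight_apply, Finsupp.sum_fintype, Fin.sum_univ_two]

def pairsSumLt (m : ℕ) : Finset (ℕ × ℕ) := (range m).biUnion antidiagonal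

@[simp] theorem mem_pairsSumLt {m : ℕ} {p : ℕ × ℕ} : p ∈ pairsSumLt m ↔ p.1 + p.2 < m := by
  simp [pairsSumLt]

theorem card_pairsSumLt (m : ℕ) : (pairsSumLt m).card = m * (m + 1) / 2 := by
  have hdisj : (range m : Set ℕ).PairwiseDisjoint antidiagonal := fun _ _ _ _ hst =>
    disjoint_left.2 fun _ hs ht =>
      hst ((mem_antidiagonal.1 hs).symm.trans (mem_antidiagonal.1 ht))
  rw [pairsSumLt, card_biUnion hdisj]
  simp only [Nat.card_antidiagonal]
  rw [← add_zero (∑ s ∈ range m, (s + 1)), ← sum_range_succ' (fun s => s), sum_range_id,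
    Nat.add_sub_cancel, mul_comm]

section Multiplicity

variable {F : Type*} [Field F]

/-- Indexed by `(a, (i, j))`: the coefficient of `X^i Y^j` in `Q(X + a, Y + r a)`. -/
noncomputable def multiplicityConditions (S : Finset F) (r : F → F) (m : ℕ) :
    MvPolynomial (Fin 2) F →ₗ[F] (S × pairsSumLt m → F) :=
  LinearMap.pi fun x => lcoeff F (Finsupp.prodEquivFinTwo x.2) ∘ₗ
    (aeval ![X 0 + C (x.1 : F), X 1 + C (r x.1)]).toLinearMap

theorem coeff_aeval_eq_zero_of_multiplicityConditions_eq_zero {S : Finset F} {r : F → F}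
    {m : ℕ} {Q : MvPolynomial (Fin 2) F} (hQ : multiplicityConditions S r m Q = 0) {a : F}
    (ha : a ∈ S) {d : Fin 2 →₀ ℕ} (hd : d 0 + d 1 < m) :
    coeff d (aeval ![X 0 + C a, X 1 + C (r a)] Q) = 0 := by
  have := congrFun hQ (⟨a, ha⟩, ⟨Finsupp.prodEquivFinTwo.symm d, mem_pairsSumLt.2 hd⟩)
  simpa only [multiplicityConditions, LinearMap.pi_apply, LinearMap.comp_apply,
    Equiv.apply_symm_apply, AlgHom.toLinearMap_apply, lcoeff_apply, Pi.zero_apply] using this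

end Multiplicity

theorem stmt_10_general {F : Type*} [Field F] {n k D m : ℕ}
    (S : Finset F) (hS : S.card = n) (r : F → F)
    (hcount : n * (m * (m + 1) / 2) <
      ((Finset.range (D + 1) ×ˢ Finset.range (D + 1)).filter
        (fun ij => ij.1 + ij.2 * (k - 1) ≤ D)).card) :
    ∃ Q : MvPolynomial (Fin 2) F, Q ≠ 0 ∧
      MvPolynomial.weightedTotalDegree ![1, k - 1] Q ≤ D ∧
      ∀ a ∈ S, ∀ d : Fin 2 →₀ ℕ, d 0 + d 1 < m →
        MvPolynomial.coeff d
          (MvPolynomial.aeval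
            ![MvPolynomial.X 0 + MvPolynomial.C a,
              MvPolynomial.X 1 + MvPolynomial.C (r a)] Q) = 0 := by
  set monomials := ((Finset.range (D + 1) ×ˢ Finset.range (D + 1)).filter
    (fun ij => ij.1 + ij.2 * (k - 1) ≤ D)).map Finsupp.prodEquivFinTwo.toEmbedding
  have hdim : Fintype.card (S × pairsSumLt m) < monomials.card := by
    simpa [monomials, card_pairsSumLt, hS] using hcount
  obtain ⟨Q, hQs, hQ0, hQ⟩ := exists_ne_zero_mem_restrictSupport_of_card_lt monomials
    (multiplicityConditions S r m) hdim
  refine ⟨Q, hQ0, weightedTotalDegree_le_of_mem_restrictSupport hQs ?_,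
    fun a ha d hd => coeff_aeval_eq_zero_of_multiplicityConditions_eq_zero hQ ha hd⟩
  rintro d hd
  simp only [monomials, coe_map, Set.mem_image, mem_coe, mem_filter] at hd
  obtain ⟨p, ⟨-, hp⟩, rfl⟩ := hd
  simpa [Finsupp.weight_prodEquivFinTwo] using hp

/-- Multiplicity interpolation: if the number of monomials of `(1,k-1)`-weighted degree
at most `D` exceeds `n · m(m+1)/2`, then there is a nonzero `Q` of `(1,k-1)`-weighted
degree at most `D` with a root of multiplicity `m` at `(a, r a)` for every `a ∈ S`. -/
theorem stmt_10 {F : Type*} [Field F] [Fintype F] {n k D m : ℕ}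
    (hk : 2 ≤ k) (hm : 1 ≤ m)
    (S : Finset F) (hS : S.card = n) (r : F → F)
    (hcount : n * (m * (m + 1) / 2) <
      ((Finset.range (D + 1) ×ˢ Finset.range (D + 1)).filter
        (fun ij => ij.1 + ij.2 * (k - 1) ≤ D)).card) :
    ∃ Q : MvPolynomial (Fin 2) F, Q ≠ 0 ∧
      MvPolynomial.weightedTotalDegree ![1, k - 1] Q ≤ D ∧
      ∀ a ∈ S, ∀ d : Fin 2 →₀ ℕ, d 0 + d 1 < m →
        MvPolynomial.coeff d
          (MvPolynomial.aeval
            ![MvPolynomial.X 0 + MvPolynomial.C a,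
              MvPolynomial.X 1 + MvPolynomial.C (r a)] Q) = 0 :=
  stmt_10_general S hS r hcount
end

section
/- (Inclusion-exclusion list-size bound) Let S be a finite set of size n and let S_1, …, S_L ⊆ S satisfy |S_i| ≥ t for all i and |S_i ∩ S_j| ≤ k - 1 for all i ≠ j. If t ≥ √(2nk) and t ≥ k, then L ≤ 2n/k. -/
/-!
If `L > 2n/k ≥ 2n/t`, pick `q + 1 ≤ L` of the sets, where `q = ⌊2n/t⌋`. Truncating
inclusion-exclusion after the pairwise terms gives `(q + 1) t ≤ n + (q+1 choose 2)(k - 1)`.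
But `q t ≤ 2n` and `2nk ≤ t²` force `q (k - 1) ≤ t`, so
`(q+1 choose 2)(k - 1) ≤ (q + 1) t / 2`, which is less than `(q + 1) t - n`
because `2n < (q + 1) t`.
-/

open Finset

theorem Finset.sum_card_le_card_biUnion_add_choose_two_mul {ι α : Type*} [DecidableEq ι]
    [DecidableEq α] (S : ι → Finset α) (c : ℕ) (A : Finset ι)
    (hc : ∀ i ∈ A, ∀ j ∈ A, i ≠ j → #(S i ∩ S j) ≤ c) :
    ∑ i ∈ A, #(S i) ≤ #(A.biUnion S) + (#A).choose 2 * c := by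
  induction A using Finset.induction_on with
  | empty => simp
  | @insert a A ha ih =>
    have ih := ih fun i hi j hj hij => hc i (mem_insert_of_mem hi) j (mem_insert_of_mem hj) hij
    have hinter : #(S a ∩ A.biUnion S) ≤ #A * c := by
      rw [inter_biUnion]
      refine card_biUnion_le.trans
        ((sum_le_card_nsmul _ _ c fun i hi => ?_).trans_eq (smul_eq_mul ..))
      exact hc a (mem_insert_self a A) i (mem_insert_of_mem hi) (ne_of_mem_of_not_mem hi ha).symm
    have hunion := card_union_add_card_inter (S a) (A.biUnion S)
    rw [sum_insert ha, biUnion_insert, card_insert_of_notMem ha, Nat.choose_succ_succ' _ 1,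
      Nat.choose_one_right]
    linarith [add_mul (#A) ((#A).choose 2) c]

theorem Nat.choose_two_mul_add_lt_mul {n t k q : ℕ} (hsq : 2 * n * k ≤ t ^ 2)
    (hq : q * t ≤ 2 * n) (hq' : 2 * n < (q + 1) * t) :
    (q + 1).choose 2 * (k - 1) + n < (q + 1) * t := by
  have ht : 0 < t := Nat.pos_of_ne_zero fun h => by simp [h] at hq'
  have hqk : q * (k - 1) ≤ t := by
    refine Nat.le_of_mul_le_mul_right ?_ ht
    calc q * (k - 1) * t = q * t * (k - 1) := by ring
      _ ≤ 2 * n * k := Nat.mul_le_mul hq (Nat.sub_le k 1)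
      _ ≤ t * t := by rwa [← sq]
  have hchoose : 2 * (q + 1).choose 2 = (q + 1) * q := by
    simpa [mul_comm] using (Nat.add_one_mul_choose_eq q 1).symm
  nlinarith

/-- Inclusion-exclusion list-size bound: subsets `S_1, …, S_L` of an `n`-set, each of
size at least `t`, with pairwise intersections of size at most `k-1`, satisfy
`L ≤ 2n/k` provided `t ≥ √(2nk)` and `t ≥ k`. -/
theorem stmt_11 {α : Type*} [DecidableEq α] {n t k L : ℕ} (hk : 1 ≤ k)
    (S : Finset α) (hS : S.card = n)
    (Si : Fin L → Finset α) (hsub : ∀ i, Si i ⊆ S)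
    (ht : ∀ i, t ≤ (Si i).card)
    (hint : ∀ i j, i ≠ j → (Si i ∩ Si j).card ≤ k - 1)
    (h1 : Real.sqrt (2 * n * k) ≤ t) (h2 : k ≤ t) :
    (L : ℝ) ≤ 2 * n / k := by
  by_contra! hL
  have hLk : 2 * n < L * k := by
    exact_mod_cast (div_lt_iff₀ (by exact_mod_cast hk : (0 : ℝ) < k)).mp hL
  have hLt : 2 * n < L * t := hLk.trans_le (Nat.mul_le_mul_left L h2)
  have ht0 : 0 < t := hk.trans h2
  have hsq : 2 * n * k ≤ t ^ 2 := by exact_mod_cast (Real.sqrt_le_iff.mp h1).2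
  obtain ⟨q, hq, hq'⟩ : ∃ q, q * t ≤ 2 * n ∧ 2 * n < (q + 1) * t :=
    ⟨2 * n / t, Nat.div_mul_le_self _ _, by simpa [add_mul] using Nat.lt_div_mul_add ht0⟩
  obtain ⟨A, -, hA⟩ : ∃ A ⊆ (univ : Finset (Fin L)), #A = q + 1 :=
    exists_subset_card_eq (by simpa using Nat.lt_of_mul_lt_mul_right (hq.trans_lt hLt))
  have hlower : (q + 1) * t ≤ ∑ i ∈ A, #(Si i) := by
    simpa [hA] using card_nsmul_le_sum A _ t fun i _ => ht i
  have hunion : #(A.biUnion Si) ≤ n :=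
    hS ▸ card_le_card (biUnion_subset.mpr fun i _ => hsub i)
  have hupper := sum_card_le_card_biUnion_add_choose_two_mul Si (k - 1) A
    fun i _ j _ hij => hint i j hij
  rw [hA] at hupper
  have hfalse := Nat.choose_two_mul_add_lt_mul hsq hq hq'
  omega
end

section
/- (Existence of the interpolation polynomial in overlapping FRS decoding) Let F be a finite field, s ≥ 1, k ≤ n, S ⊆ F with |S| = n, and r : S → F^s. Then there exists a nonzero polynomial Q(X, Y_1, …, Y_s) = A_0(X) + Σ_{i=1}^s A_i(X)·Y_i with deg(A_0) < (n−k)/(s+1) + k and deg(A_i) ≤ (n−k)/(s+1) for 1 ≤ i ≤ s, such that Q(a, r(a)_1, …, r(a)_s) = 0 for all a ∈ S. -/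
/-!
The coefficients of `A₀, …, A_s` under the degree bounds form a vector space of dimension
larger than `n = |S|`, while the interpolation conditions `Q(a, r(a)) = 0` are `n` linear
equations in them; so the linear map sending `(A₀, A)` to its values on `S` has a nonzero kernel.
The degree budget for `A₀` is what remains of `n + 1` after `A₁, …, A_s` take `d + 1` coefficients
each, `d = ⌊(n - k)/(s + 1)⌋`.
-/

open Polynomial

namespace Polynomial

variable {F : Type*} [Field F] {s : ℕ}

noncomputable def interpolationMap (S : Finset F) (r : F → Fin s → F) (c d : ℕ) :
    F[X]_c × (Fin s → F[X]_d) →ₗ[F] (S → F) where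
  toFun p a := (p.1 : F[X]).eval (a : F) + ∑ i, (p.2 i : F[X]).eval (a : F) * r a i
  map_add' p q := by
    ext a
    simp only [Prod.fst_add, Prod.snd_add, Pi.add_apply, Submodule.coe_add, eval_add, add_mul,
      Finset.sum_add_distrib]
    ring
  map_smul' c p := by
    ext a
    simp only [Prod.smul_fst, Prod.smul_snd, Pi.smul_apply, Submodule.coe_smul, eval_smul,
      smul_eq_mul, mul_assoc, ← Finset.mul_sum, RingHom.id_apply]
    ring

theorem finrank_degreeLT_prod_pi (c d : ℕ) :
    Module.finrank F (F[X]_c × (Fin s → F[X]_d)) = c + s * d := by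
  simp [Module.finrank_prod, Module.finrank_pi_fintype, (degreeLTEquiv F c).finrank_eq,
    (degreeLTEquiv F d).finrank_eq]

theorem exists_interpolant_mem_degreeLT (S : Finset F) (r : F → Fin s → F) {c d : ℕ}
    (hcard : S.card < c + s * d) :
    ∃ (A0 : F[X]) (A : Fin s → F[X]), ¬(A0 = 0 ∧ ∀ i, A i = 0) ∧ A0 ∈ F[X]_c ∧
      (∀ i, A i ∈ F[X]_d) ∧ ∀ a ∈ S, A0.eval a + ∑ i, (A i).eval a * r a i = 0 := by
  have hker : LinearMap.ker (interpolationMap S r c d) ≠ ⊥ :=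
    LinearMap.ker_ne_bot_of_finrank_lt <| by
      rwa [Module.finrank_fintype_fun_eq_card, Fintype.card_coe, finrank_degreeLT_prod_pi]
  obtain ⟨p, hp, hp0⟩ := Submodule.exists_mem_ne_zero_of_ne_bot hker
  refine ⟨p.1, fun i => p.2 i, ?_, p.1.2, fun i => (p.2 i).2, fun a ha => ?_⟩
  · rintro ⟨h0, hA⟩
    exact hp0 (Prod.ext (Subtype.ext h0) (by ext1 i; exact Subtype.ext (hA i)))
  · exact congrFun hp ⟨a, ha⟩

end Polynomial

theorem natCast_div_succ_le {n k s : ℕ} (hkn : k ≤ n) :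
    (((n - k) / (s + 1) : ℕ) : ℝ) ≤ ((n : ℝ) - k) / (s + 1) := by
  simpa [Nat.cast_sub hkn] using (Nat.cast_div_le (α := ℝ) (m := n - k) (n := s + 1))

theorem natCast_lt_div_succ_add {n k s m d : ℕ} (hs : 1 ≤ s) (hkn : k ≤ n)
    (hd : n - k < (s + 1) * (d + 1)) (hm : m + s * (d + 1) ≤ n) :
    (m : ℝ) < ((n : ℝ) - k) / (s + 1) + k := by
  have hquot : (n : ℝ) - k < (s + 1) * (d + 1) := by
    rw [← Nat.cast_sub hkn]
    exact_mod_cast hd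
  have hmR : (m : ℝ) + s * (d + 1) ≤ n := by exact_mod_cast hm
  have hsR : (1 : ℝ) ≤ s := by exact_mod_cast hs
  rw [div_add' _ _ _ (by positivity), lt_div_iff₀ (by positivity)]
  nlinarith

theorem stmt_13_general {F : Type*} [Field F] {n k s : ℕ}
    (hs : 1 ≤ s) (hkn : k ≤ n)
    (S : Finset F) (hS : S.card = n) (r : F → Fin s → F) :
    ∃ (A0 : Polynomial F) (A : Fin s → Polynomial F),
      ¬(A0 = 0 ∧ ∀ i, A i = 0) ∧
      (A0 = 0 ∨ (A0.natDegree : ℝ) < ((n : ℝ) - k) / (s + 1) + k) ∧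
      (∀ i, ((A i).natDegree : ℝ) ≤ ((n : ℝ) - k) / (s + 1)) ∧
      ∀ a ∈ S, A0.eval a + ∑ i, (A i).eval a * r a i = 0 := by
  set d := (n - k) / (s + 1)
  have hd : n - k < (s + 1) * (d + 1) := Nat.lt_mul_div_succ (n - k) (Nat.succ_pos s)
  obtain ⟨A0, A, hne, hA0, hA, hvanish⟩ :=
    exists_interpolant_mem_degreeLT S r (c := n + 1 - s * (d + 1)) (d := d + 1) (by omega)
  refine ⟨A0, A, hne, ?_, fun i => ?_, hvanish⟩
  · by_cases h0 : A0 = 0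
    · exact Or.inl h0
    · have hdeg := (natDegree_lt_iff_degree_lt h0).mpr (mem_degreeLT.mp hA0)
      exact Or.inr (natCast_lt_div_succ_add hs hkn hd (by omega))
  · have hAi := hA i
    rw [degreeLT_succ_eq_degreeLE, mem_degreeLE] at hAi
    exact (Nat.cast_le.mpr (natDegree_le_of_degree_le hAi)).trans (natCast_div_succ_le hkn)

/-- Existence of the interpolation polynomial in overlapping FRS decoding: there exist
`A_0, A_1, …, A_s`, not all zero, with `deg A_0 < (n−k)/(s+1) + k` and
`deg A_i ≤ (n−k)/(s+1)`, such that `A_0(a) + Σ_i A_i(a)·r(a)_i = 0` for all `a ∈ S`. -/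
theorem stmt_13 {F : Type*} [Field F] [Fintype F] {n k s : ℕ}
    (hs : 1 ≤ s) (hkn : k ≤ n)
    (S : Finset F) (hS : S.card = n) (r : F → Fin s → F) :
    ∃ (A0 : Polynomial F) (A : Fin s → Polynomial F),
      ¬(A0 = 0 ∧ ∀ i, A i = 0) ∧
      (A0 = 0 ∨ (A0.natDegree : ℝ) < ((n : ℝ) - k) / (s + 1) + k) ∧
      (∀ i, ((A i).natDegree : ℝ) ≤ ((n : ℝ) - k) / (s + 1)) ∧
      ∀ a ∈ S, A0.eval a + ∑ i, (A i).eval a * r a i = 0 :=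
  stmt_13_general hs hkn S hS r
end
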